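/- For a cochain complex C of R[x,x^{-1},y,y^{-1}]-modules, the evaluation map C ⊗_R R[x,x^{-1},y,y^{-1}] → C, z ⊗ p ↦ zp, induces a quasi-isomorphism from the mapping 2-torus T(y, x; 0) to C, where x and y denote the R-linear self-maps of C given by multiplication by the indeterminates. -/

import Mathlib

open scoped TensorProduct

noncomputable section

variable (R : Type) [CommRing R]

/-- The Laurent polynomial ring in two variables, `L = R[x,x⁻¹,y,y⁻¹]`, realised as the
monoid algebra of `ℤ × ℤ` over `R`. -/
abbrev L2 := AddMonoidAlgebra R (ℤ × ℤ)

/-- The indeterminate `x ∈ L`. -/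
noncomputable def xvar : L2 R := AddMonoidAlgebra.single ((1 : ℤ), (0 : ℤ)) (1 : R)

/-- The indeterminate `y ∈ L`. -/
noncomputable def yvar : L2 R := AddMonoidAlgebra.single ((0 : ℤ), (1 : ℤ)) (1 : R)

/-- A chain map `f` between (elementwise given) cochain complexes is a quasi-isomorphism. -/
def IsQuasiIso (S : Type) [Ring S] (X Y : ℤ → Type)
    [∀ q, AddCommGroup (X q)] [∀ q, Module S (X q)]
    [∀ q, AddCommGroup (Y q)] [∀ q, Module S (Y q)]
    (dX : ∀ q, X q →ₗ[S] X (q + 1)) (dY : ∀ q, Y q →ₗ[S] Y (q + 1))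
    (f : ∀ q, X q →ₗ[S] Y q) : Prop :=
  (∀ (q : ℤ) (y : Y (q + 1)), dY (q + 1) y = 0 →
      ∃ x : X (q + 1), dX (q + 1) x = 0 ∧ ∃ u : Y q, y - f (q + 1) x = dY q u) ∧
  (∀ (q : ℤ) (x : X (q + 1)), dX (q + 1) x = 0 → (∃ u : Y q, f (q + 1) x = dY q u) →
      ∃ v : X q, dX q v = x)

variable (C : ℤ → Type) [∀ n, AddCommGroup (C n)] [∀ n, Module R (C n)]

/-- The `n`-th term of the mapping 2-torus `T(f,g;0)`:
`(C^{n+2} ⊗ L) ⊕ (C^{n+1} ⊗ L) ⊕ (C^{n+1} ⊗ L) ⊕ (C^n ⊗ L)`, the Laurent polynomial factor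
written on the left. -/
def t2X (n : ℤ) : Type :=
  (L2 R ⊗[R] C (n + 1 + 1)) × (L2 R ⊗[R] C (n + 1)) × (L2 R ⊗[R] C (n + 1)) × (L2 R ⊗[R] C n)

instance (n : ℤ) : AddCommGroup (t2X R C n) := by unfold t2X; infer_instance
instance (n : ℤ) : Module (L2 R) (t2X R C n) := by unfold t2X; infer_instance

/-- The map `f ⊗ id − id ⊗ m` on `L ⊗_R C^n`, for an `R`-linear self map `f` of `C^n` and a
Laurent polynomial `m ∈ L`. -/
def twist (n : ℤ) (f : C n →ₗ[R] C n) (m : L2 R) : L2 R ⊗[R] C n →ₗ[L2 R] L2 R ⊗[R] C n :=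
  LinearMap.baseChange (L2 R) f - LinearMap.lsmul (L2 R) (L2 R ⊗[R] C n) m

/-- The differential of the mapping 2-torus `T(f,g;0)` of two commuting `R`-linear self maps
`f` and `g` of `C`, with `f ⊗ id − id ⊗ y` and `g ⊗ id − id ⊗ x` as structure maps: the
matrix `((d,0,0,0), (−(g−x),−d,0,0), ((f−y),0,−d,0), (0,(f−y),(g−x),d))`. -/
def t2D (dC : ∀ n, C n →ₗ[R] C (n + 1)) (f g : ∀ n, C n →ₗ[R] C n) (n : ℤ) :
    t2X R C n →ₗ[L2 R] t2X R C (n + 1) :=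
  letI p1 : t2X R C n →ₗ[L2 R] L2 R ⊗[R] C (n + 1 + 1) := LinearMap.fst (L2 R) _ _
  letI r1 := LinearMap.snd (L2 R) (L2 R ⊗[R] C (n + 1 + 1))
    ((L2 R ⊗[R] C (n + 1)) × (L2 R ⊗[R] C (n + 1)) × (L2 R ⊗[R] C n))
  letI p2 : t2X R C n →ₗ[L2 R] L2 R ⊗[R] C (n + 1) := (LinearMap.fst (L2 R) _ _).comp r1
  letI r2 := (LinearMap.snd (L2 R) (L2 R ⊗[R] C (n + 1))
    ((L2 R ⊗[R] C (n + 1)) × (L2 R ⊗[R] C n))).comp r1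
  letI p3 : t2X R C n →ₗ[L2 R] L2 R ⊗[R] C (n + 1) := (LinearMap.fst (L2 R) _ _).comp r2
  letI p4 : t2X R C n →ₗ[L2 R] L2 R ⊗[R] C n := (LinearMap.snd (L2 R) _ _).comp r2
  LinearMap.prod ((LinearMap.baseChange (L2 R) (dC (n + 1 + 1))).comp p1)
    (LinearMap.prod
      (-((twist R C (n + 1 + 1) (g (n + 1 + 1)) (xvar R)).comp p1)
        - (LinearMap.baseChange (L2 R) (dC (n + 1))).comp p2)
      (LinearMap.prod
        ((twist R C (n + 1 + 1) (f (n + 1 + 1)) (yvar R)).comp p1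
          - (LinearMap.baseChange (L2 R) (dC (n + 1))).comp p3)
        ((twist R C (n + 1) (f (n + 1)) (yvar R)).comp p2
          + (twist R C (n + 1) (g (n + 1)) (xvar R)).comp p3
          + (LinearMap.baseChange (L2 R) (dC n)).comp p4)))

/-!
`T(y, x; 0)` is the total complex of a double complex whose `n`-th row is the Koszul complex
of the commuting operators `y ⊗ 1 - 1 ⊗ y` and `x ⊗ 1 - 1 ⊗ x` on `L ⊗_R Cⁿ`, augmented by
evaluation. For every
`L`-module `D` the augmented complex `0 → L ⊗ D → (L ⊗ D)² → L ⊗ D → D → 0` is exact: under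
`L ⊗_R D ≅ ℤ →₀ ℤ →₀ D` the operators become "automorphism minus shift" in one variable each, and
in one variable, for an automorphism `t` of `D`, the map `F ↦ (i ↦ t (F i) - F (i - 1))` on
`ℤ →₀ D` is injective with cokernel `D`, detected by `F ↦ ∑ tⁱ (F i)`; two variables follow by
iterating. A diagram chase through these exact rows shows that evaluation is a quasi-isomorphism.
-/

open Finsupp

namespace LaurentKoszul

theorem exact_mapRange_linearMap {S M N P ι : Type*} [Ring S] [AddCommGroup M] [Module S M]
    [AddCommGroup N] [Module S N] [AddCommGroup P] [Module S P] {f : M →ₗ[S] N} {g : N →ₗ[S] P}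
    (hf : Function.Injective f) (h : Function.Exact f g) :
    Function.Exact (mapRange.linearMap (α := ι) f) (mapRange.linearMap g) := by
  rw [LinearMap.exact_iff, ker_mapRange, range_mapRange_linearMap _ (LinearMap.ker_eq_bot.mpr hf),
    LinearMap.exact_iff.mp h]

section OneVariable

variable {S D : Type*} [Ring S] [AddCommGroup D] [Module S D]

def autSubShift (t : D ≃ₗ[S] D) : (ℤ →₀ D) →ₗ[S] (ℤ →₀ D) :=
  mapRange.linearMap t.toLinearMap - (Finsupp.domLCongr (Equiv.addRight 1)).toLinearMap

def zpowSum (t : D ≃ₗ[S] D) : (ℤ →₀ D) →ₗ[S] D :=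
  lsum ℕ fun i => (t ^ i).toLinearMap

variable (t : D ≃ₗ[S] D)

theorem autSubShift_apply (F : ℤ →₀ D) (i : ℤ) : autSubShift t F i = t (F i) - F (i - 1) := by
  simp [autSubShift, sub_eq_add_neg]

theorem autSubShift_single (i : ℤ) (d : D) :
    autSubShift t (single i d) = single i (t d) - single (i + 1) d := by
  simp [autSubShift]

@[simp]
theorem zpowSum_single (i : ℤ) (d : D) : zpowSum t (single i d) = (t ^ i) d := by
  simp [zpowSum]

theorem zpow_add_one_apply (i : ℤ) (d : D) : (t ^ (i + 1)) d = (t ^ i) (t d) := by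
  rw [zpow_add_one, LinearEquiv.mul_apply]

theorem autSubShift_injective : Function.Injective (autSubShift t) := by
  rw [← LinearMap.ker_eq_bot, LinearMap.ker_eq_bot']
  intro F hF
  by_contra hne
  obtain ⟨i, hi, hmax⟩ := F.support.exists_max_image id (support_nonempty_iff.mpr hne)
  have hnext : F (i + 1) = 0 := notMem_support_iff.mp fun h => absurd (hmax _ h) (by simp)
  have htop := DFunLike.congr_fun hF (i + 1)
  rw [autSubShift_apply, hnext, map_zero, zero_sub, add_sub_cancel_right] at htop
  exact mem_support_iff.mp hi (neg_eq_zero.mp htop)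

theorem zpowSum_comp_autSubShift : zpowSum t ∘ₗ autSubShift t = 0 := by
  ext i d
  simp [autSubShift_single, zpow_add_one_apply]

theorem mkQ_single_eq_mkQ_single_zero (i : ℤ) (d : D) :
    (LinearMap.range (autSubShift t)).mkQ (single i d)
      = (LinearMap.range (autSubShift t)).mkQ (single 0 ((t ^ i) d)) := by
  set q := (LinearMap.range (autSubShift t)).mkQ
  have step : ∀ j e, q (single (j + 1) e) = q (single j (t e)) := fun j e => by
    rw [eq_comm, ← sub_eq_zero, ← map_sub, Submodule.mkQ_apply, Submodule.Quotient.mk_eq_zero]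
    exact ⟨single j e, autSubShift_single t j e⟩
  induction i using Int.induction_on generalizing d with
  | zero => simp
  | succ k ih => rw [step, ih, zpow_add_one_apply]
  | pred k ih =>
    rw [← t.apply_symm_apply d, ← step, sub_add_cancel, ih, ← zpow_add_one_apply, sub_add_cancel]

theorem mkQ_eq_mkQ_single_zero_zpowSum (F : ℤ →₀ D) :
    (LinearMap.range (autSubShift t)).mkQ F
      = (LinearMap.range (autSubShift t)).mkQ (single 0 (zpowSum t F)) := by
  have hmaps : (LinearMap.range (autSubShift t)).mkQ
      = (LinearMap.range (autSubShift t)).mkQ ∘ₗ lsingle 0 ∘ₗ zpowSum t := by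
    ext i d : 2
    simpa using mkQ_single_eq_mkQ_single_zero t i d
  exact LinearMap.congr_fun hmaps F

theorem exact_autSubShift_zpowSum : Function.Exact (autSubShift t) (zpowSum t) := by
  refine LinearMap.exact_iff.mpr (le_antisymm (fun F hF => ?_)
    (LinearMap.range_le_ker_iff.mpr (zpowSum_comp_autSubShift t)))
  have hF' := mkQ_eq_mkQ_single_zero_zpowSum t F
  rwa [LinearMap.mem_ker.mp hF, single_zero, map_zero, Submodule.mkQ_apply,
    Submodule.Quotient.mk_eq_zero] at hF'

theorem zpowSum_surjective : Function.Surjective (zpowSum t) :=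
  fun d => ⟨single 0 d, by simp⟩

theorem mapRange_comp_autSubShift {E : Type*} [AddCommGroup E] [Module S E] (t' : E ≃ₗ[S] E)
    (φ : D →ₗ[S] E) (h : ∀ d, φ (t d) = t' (φ d)) :
    mapRange.linearMap φ ∘ₗ autSubShift t = autSubShift t' ∘ₗ mapRange.linearMap φ := by
  ext i d : 2
  simp only [LinearMap.comp_apply, lsingle_apply, autSubShift_single, map_sub,
    mapRange.linearMap_apply, mapRange_single, h]

theorem zpowSum_comp_mapRange {s : D ≃ₗ[S] D} (h : Commute s t) :
    zpowSum t ∘ₗ mapRange.linearMap s.toLinearMap = s.toLinearMap ∘ₗ zpowSum t := by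
  ext i d : 2
  simp [← LinearEquiv.mul_apply, (h.zpow_right i).eq]

end OneVariable

section Koszul

variable {S V W M : Type*} [Ring S] [AddCommGroup V] [Module S V] [AddCommGroup W] [Module S W]
  [AddCommGroup M] [Module S M] {a b : V →ₗ[S] V} {s : V →ₗ[S] W} {b' : W →ₗ[S] W}

theorem koszul_exists_of_add_eq_zero (hab : a ∘ₗ b = b ∘ₗ a) (ha : Function.Injective a)
    (has : Function.Exact a s) (hsb : s ∘ₗ b = b' ∘ₗ s) (hb' : Function.Injective b')
    {u v : V} (h : a u + b v = 0) : ∃ c, u = -b c ∧ v = a c := by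
  have hsv : s v = 0 := hb' <| by
    rw [map_zero, ← LinearMap.comp_apply, ← hsb, LinearMap.comp_apply,
      eq_neg_of_add_eq_zero_right h, map_neg, has.apply_apply_eq_zero, neg_zero]
  obtain ⟨c, rfl⟩ := (has v).mp hsv
  refine ⟨c, eq_neg_of_add_eq_zero_left (ha ?_), rfl⟩
  rw [map_add, map_zero, ← LinearMap.comp_apply a b, hab, LinearMap.comp_apply, h]

theorem koszul_exists_of_comp_eq_zero {e : W →ₗ[S] M} (has : Function.Exact a s)
    (hs : Function.Surjective s) (hsb : s ∘ₗ b = b' ∘ₗ s) (hb'e : Function.Exact b' e)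
    {z : V} (h : e (s z) = 0) : ∃ u v, z = a u + b v := by
  obtain ⟨w, hw⟩ := (hb'e _).mp h
  obtain ⟨v, rfl⟩ := hs w
  have hz : s (z - b v) = 0 := by
    rw [map_sub, ← LinearMap.comp_apply s b, hsb, LinearMap.comp_apply, hw, sub_self]
  obtain ⟨u, hu⟩ := (has _).mp hz
  exact ⟨u, v, by rw [hu, sub_add_cancel]⟩

end Koszul

section Coordinates

variable {D : Type*} [AddCommGroup D] [Module R D]

variable (D) in
def tensorCoeffEquiv : L2 R ⊗[R] D ≃ₗ[R] (ℤ →₀ ℤ →₀ D) :=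
  (TensorProduct.congr (AddMonoidAlgebra.coeffLinearEquiv R) (LinearEquiv.refl R D)).trans
    ((TensorProduct.finsuppScalarLeft R D (ℤ × ℤ)).trans (curryLinearEquiv R))

theorem tensorCoeffEquiv_single_tmul (g : ℤ × ℤ) (d : D) :
    tensorCoeffEquiv R D (AddMonoidAlgebra.single g 1 ⊗ₜ d) = single g.1 (single g.2 d) := by
  rw [← LinearEquiv.eq_symm_apply]
  simp [tensorCoeffEquiv]

end Coordinates

section LaurentModule

variable {D : Type*} [AddCommGroup D] [Module R D] [Module (L2 R) D] [IsScalarTower R (L2 R) D]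

def monomialAut : Multiplicative (ℤ × ℤ) →* D ≃ₗ[R] D :=
  (DistribMulAction.toModuleAut R D).comp (AddMonoidAlgebra.of R (ℤ × ℤ)).toHomUnits

theorem monomialAut_apply (g : Multiplicative (ℤ × ℤ)) (d : D) :
    monomialAut R g d = AddMonoidAlgebra.single g.toAdd (1 : R) • d :=
  rfl

theorem commute_monomialAut (g h : Multiplicative (ℤ × ℤ)) :
    Commute (monomialAut R g : D ≃ₗ[R] D) (monomialAut R h) :=
  (Commute.all g h).map _

local notation "σx" => monomialAut R (Multiplicative.ofAdd ((1 : ℤ), (0 : ℤ)))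
local notation "σy" => monomialAut R (Multiplicative.ofAdd ((0 : ℤ), (1 : ℤ)))

variable {R}

variable (D) in
def actionDiff (m : L2 R) : L2 R ⊗[R] D →ₗ[L2 R] L2 R ⊗[R] D :=
  LinearMap.baseChange (L2 R) ((LinearMap.lsmul (L2 R) D m).restrictScalars R)
    - LinearMap.lsmul (L2 R) (L2 R ⊗[R] D) m

theorem actionDiff_single_tmul (g h : ℤ × ℤ) (d : D) :
    actionDiff D (AddMonoidAlgebra.single h 1 : L2 R) (AddMonoidAlgebra.single g 1 ⊗ₜ d)
      = AddMonoidAlgebra.single g (1 : R) ⊗ₜ (AddMonoidAlgebra.single h (1 : R) • d)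
        - AddMonoidAlgebra.single (h + g) (1 : R) ⊗ₜ d := by
  simp [actionDiff, TensorProduct.smul_tmul', AddMonoidAlgebra.single_mul_single]

theorem tensorCoeffEquiv_actionDiff_xvar (z : L2 R ⊗[R] D) :
    tensorCoeffEquiv R D (actionDiff D (xvar R) z)
      = autSubShift (mapRange.linearEquiv σx) (tensorCoeffEquiv R D z) := by
  suffices h : (tensorCoeffEquiv R D).toLinearMap ∘ₗ (actionDiff D (xvar R)).restrictScalars R
      = autSubShift (mapRange.linearEquiv σx) ∘ₗ (tensorCoeffEquiv R D).toLinearMap from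
    LinearMap.congr_fun h z
  ext ⟨i, j⟩ d : 4
  simp [xvar, actionDiff_single_tmul, tensorCoeffEquiv_single_tmul, autSubShift_single,
    monomialAut_apply, add_comm 1 i]

theorem tensorCoeffEquiv_actionDiff_yvar (z : L2 R ⊗[R] D) :
    tensorCoeffEquiv R D (actionDiff D (yvar R) z)
      = mapRange.linearMap (autSubShift σy) (tensorCoeffEquiv R D z) := by
  suffices h : (tensorCoeffEquiv R D).toLinearMap ∘ₗ (actionDiff D (yvar R)).restrictScalars R
      = mapRange.linearMap (autSubShift σy) ∘ₗ (tensorCoeffEquiv R D).toLinearMap from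
    LinearMap.congr_fun h z
  ext ⟨i, j⟩ d : 4
  simp [yvar, actionDiff_single_tmul, tensorCoeffEquiv_single_tmul, autSubShift_single,
    monomialAut_apply, add_comm 1 j]

theorem liftBaseChange_id_eq_zpowSum (z : L2 R ⊗[R] D) :
    LinearMap.liftBaseChange (L2 R) (LinearMap.id : D →ₗ[R] D) z
      = zpowSum σx (mapRange.linearMap (zpowSum σy) (tensorCoeffEquiv R D z)) := by
  suffices h : (LinearMap.liftBaseChange (L2 R) (LinearMap.id : D →ₗ[R] D)).restrictScalars R
      = zpowSum σx ∘ₗ mapRange.linearMap (zpowSum σy) ∘ₗ (tensorCoeffEquiv R D).toLinearMap from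
    LinearMap.congr_fun h z
  ext ⟨i, j⟩ d : 4
  simp [tensorCoeffEquiv_single_tmul, ← map_zpow, ← ofAdd_zsmul, monomialAut_apply, smul_smul,
    AddMonoidAlgebra.single_mul_single]

theorem mapRange_zpowSum_comp_autSubShift :
    mapRange.linearMap (zpowSum σy) ∘ₗ autSubShift (mapRange.linearEquiv σx)
      = autSubShift σx ∘ₗ mapRange.linearMap (α := ℤ) (zpowSum (σy : D ≃ₗ[R] D)) :=
  mapRange_comp_autSubShift _ _ _ fun F =>
    LinearMap.congr_fun (zpowSum_comp_mapRange σy (commute_monomialAut R _ _)) F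

theorem mapRange_autSubShift_comp_autSubShift :
    mapRange.linearMap (autSubShift σy) ∘ₗ autSubShift (mapRange.linearEquiv σx)
      = autSubShift (mapRange.linearEquiv σx)
        ∘ₗ mapRange.linearMap (α := ℤ) (autSubShift (σy : D ≃ₗ[R] D)) := by
  have hy : mapRange.linearMap (σx : D ≃ₗ[R] D).toLinearMap ∘ₗ autSubShift (σy : D ≃ₗ[R] D)
      = autSubShift σy ∘ₗ mapRange.linearMap (σx : D ≃ₗ[R] D).toLinearMap :=
    mapRange_comp_autSubShift _ _ _ fun d => LinearEquiv.congr_fun (commute_monomialAut R _ _).eq d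
  exact mapRange_comp_autSubShift _ _ _ fun F => (LinearMap.congr_fun hy F).symm

theorem actionDiff_yvar_injective : Function.Injective (actionDiff D (yvar R)) := by
  intro u v h
  apply (tensorCoeffEquiv R D).injective
  apply mapRange_injective _ (map_zero _) (autSubShift_injective σy)
  simpa only [tensorCoeffEquiv_actionDiff_yvar, mapRange.linearMap_apply] using
    congrArg (tensorCoeffEquiv R D) h

theorem exists_of_actionDiff_add_actionDiff_eq_zero {u v : L2 R ⊗[R] D}
    (h : actionDiff D (yvar R) u + actionDiff D (xvar R) v = 0) :
    ∃ c, u = -actionDiff D (xvar R) c ∧ v = actionDiff D (yvar R) c := by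
  have hcoeff := congrArg (tensorCoeffEquiv R D) h
  rw [map_add, tensorCoeffEquiv_actionDiff_yvar, tensorCoeffEquiv_actionDiff_xvar, map_zero]
    at hcoeff
  obtain ⟨c, hu, hv⟩ := koszul_exists_of_add_eq_zero mapRange_autSubShift_comp_autSubShift
    (mapRange_injective _ (map_zero _) (autSubShift_injective σy))
    (exact_mapRange_linearMap (autSubShift_injective _) (exact_autSubShift_zpowSum _))
    mapRange_zpowSum_comp_autSubShift (autSubShift_injective _) hcoeff
  refine ⟨(tensorCoeffEquiv R D).symm c, (tensorCoeffEquiv R D).injective ?_,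
    (tensorCoeffEquiv R D).injective ?_⟩
  · rw [hu, map_neg, tensorCoeffEquiv_actionDiff_xvar, LinearEquiv.apply_symm_apply]
  · rw [hv, tensorCoeffEquiv_actionDiff_yvar, LinearEquiv.apply_symm_apply]

theorem exists_of_liftBaseChange_id_eq_zero {z : L2 R ⊗[R] D}
    (h : LinearMap.liftBaseChange (L2 R) (LinearMap.id : D →ₗ[R] D) z = 0) :
    ∃ u v, z = actionDiff D (yvar R) u + actionDiff D (xvar R) v := by
  rw [liftBaseChange_id_eq_zpowSum] at h
  obtain ⟨u, v, huv⟩ := koszul_exists_of_comp_eq_zero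
    (exact_mapRange_linearMap (autSubShift_injective _) (exact_autSubShift_zpowSum _))
    (mapRange_surjective _ (map_zero _) (zpowSum_surjective _))
    mapRange_zpowSum_comp_autSubShift (exact_autSubShift_zpowSum _) h
  refine ⟨(tensorCoeffEquiv R D).symm u, (tensorCoeffEquiv R D).symm v,
    (tensorCoeffEquiv R D).injective ?_⟩
  rw [huv, map_add, tensorCoeffEquiv_actionDiff_yvar, tensorCoeffEquiv_actionDiff_xvar,
    LinearEquiv.apply_symm_apply, LinearEquiv.apply_symm_apply]

end LaurentModule

section Equivariance

variable {R} {D E : Type*} [AddCommGroup D] [Module R D] [Module (L2 R) D]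
  [IsScalarTower R (L2 R) D] [AddCommGroup E] [Module R E] [Module (L2 R) E]
  [IsScalarTower R (L2 R) E] (φ : D →ₗ[L2 R] E)

theorem baseChange_actionDiff (m : L2 R) (z : L2 R ⊗[R] D) :
    LinearMap.baseChange (L2 R) (φ.restrictScalars R) (actionDiff D m z)
      = actionDiff E m (LinearMap.baseChange (L2 R) (φ.restrictScalars R) z) := by
  suffices h : LinearMap.baseChange (L2 R) (φ.restrictScalars R) ∘ₗ actionDiff D m
      = actionDiff E m ∘ₗ LinearMap.baseChange (L2 R) (φ.restrictScalars R) from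
    LinearMap.congr_fun h z
  ext d
  simp [actionDiff]

theorem liftBaseChange_id_baseChange (z : L2 R ⊗[R] D) :
    LinearMap.liftBaseChange (L2 R) LinearMap.id
        (LinearMap.baseChange (L2 R) (φ.restrictScalars R) z)
      = φ (LinearMap.liftBaseChange (L2 R) (LinearMap.id : D →ₗ[R] D) z) := by
  suffices h : LinearMap.liftBaseChange (L2 R) LinearMap.id
        ∘ₗ LinearMap.baseChange (L2 R) (φ.restrictScalars R)
      = φ ∘ₗ LinearMap.liftBaseChange (L2 R) (LinearMap.id : D →ₗ[R] D) from
    LinearMap.congr_fun h z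
  ext d
  simp

end Equivariance

section MappingTorus

variable {R C} [∀ n, Module (L2 R) (C n)] [∀ n, IsScalarTower R (L2 R) (C n)]
  (dC : ∀ n, C n →ₗ[L2 R] C (n + 1))

def tensorDiff (n : ℤ) : L2 R ⊗[R] C n →ₗ[L2 R] L2 R ⊗[R] C (n + 1) :=
  LinearMap.baseChange (L2 R) ((dC n).restrictScalars R)

def torusDiff (n : ℤ) : t2X R C n →ₗ[L2 R] t2X R C (n + 1) :=
  t2D R C (fun m => (dC m).restrictScalars R)
    (fun m => ((LinearMap.lsmul (L2 R) (C m)) (yvar R)).restrictScalars R)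
    (fun m => ((LinearMap.lsmul (L2 R) (C m)) (xvar R)).restrictScalars R) n

variable (R C) in
def torusEval (n : ℤ) : t2X R C n →ₗ[L2 R] C n :=
  (LinearMap.liftBaseChange (L2 R) (LinearMap.id : C n →ₗ[R] C n)).comp
    ((LinearMap.snd (L2 R) (L2 R ⊗[R] C (n + 1)) (L2 R ⊗[R] C n)).comp
      ((LinearMap.snd (L2 R) (L2 R ⊗[R] C (n + 1))
        ((L2 R ⊗[R] C (n + 1)) × (L2 R ⊗[R] C n))).comp
        (LinearMap.snd (L2 R) (L2 R ⊗[R] C (n + 1 + 1))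
          ((L2 R ⊗[R] C (n + 1)) × (L2 R ⊗[R] C (n + 1)) × (L2 R ⊗[R] C n)))))

section Components

variable {n : ℤ} (p₁ : L2 R ⊗[R] C (n + 1 + 1)) (p₂ p₃ : L2 R ⊗[R] C (n + 1))
  (p₄ : L2 R ⊗[R] C n)

theorem torusDiff_apply :
    torusDiff dC n (p₁, p₂, p₃, p₄)
      = (tensorDiff dC _ p₁,
        -actionDiff _ (xvar R) p₁ - tensorDiff dC _ p₂,
        actionDiff _ (yvar R) p₁ - tensorDiff dC _ p₃,
        actionDiff _ (yvar R) p₂ + actionDiff _ (xvar R) p₃ + tensorDiff dC _ p₄) :=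
  rfl

theorem torusDiff_eq_zero_iff :
    torusDiff dC n (p₁, p₂, p₃, p₄) = 0 ↔
      tensorDiff dC _ p₁ = 0 ∧ -actionDiff _ (xvar R) p₁ - tensorDiff dC _ p₂ = 0 ∧
        actionDiff _ (yvar R) p₁ - tensorDiff dC _ p₃ = 0 ∧
        actionDiff _ (yvar R) p₂ + actionDiff _ (xvar R) p₃ + tensorDiff dC _ p₄ = 0 := by
  rw [torusDiff_apply]
  exact Prod.ext_iff.trans (and_congr_right' (Prod.ext_iff.trans (and_congr_right' Prod.ext_iff)))

theorem torusEval_apply :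
    torusEval R C n (p₁, p₂, p₃, p₄) = LinearMap.liftBaseChange (L2 R) LinearMap.id p₄ :=
  rfl

end Components

theorem tensorDiff_tensorDiff (hsq : ∀ n (x : C n), dC (n + 1) (dC n x) = 0) (n : ℤ)
    (z : L2 R ⊗[R] C n) : tensorDiff dC (n + 1) (tensorDiff dC n z) = 0 := by
  rw [tensorDiff, tensorDiff, ← LinearMap.comp_apply, ← LinearMap.baseChange_comp,
    show (dC (n + 1)).restrictScalars R ∘ₗ (dC n).restrictScalars R = 0 from
      LinearMap.ext (hsq n), LinearMap.baseChange_zero, LinearMap.zero_apply]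

theorem tensorDiff_actionDiff (n : ℤ) (m : L2 R) (z : L2 R ⊗[R] C n) :
    tensorDiff dC n (actionDiff _ m z) = actionDiff _ m (tensorDiff dC n z) :=
  baseChange_actionDiff (dC n) m z

theorem torusEval_cohomology_surjective (q : ℤ) (y : C (q + 1)) (hy : dC (q + 1) y = 0) :
    ∃ x, torusDiff dC (q + 1) x = 0 ∧ ∃ u, y - torusEval R C (q + 1) x = dC q u :=
  ⟨(0, 0, 0, 1 ⊗ₜ y), (torusDiff_eq_zero_iff dC _ _ _ _).mpr
      ⟨map_zero _, by simp, by simp, by simp [tensorDiff, hy]⟩,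
    0, by simp [torusEval_apply]⟩

theorem torusEval_cohomology_injective (hsq : ∀ n (x : C n), dC (n + 1) (dC n x) = 0)
    (q : ℤ) (p : t2X R C (q + 1)) (hp : torusDiff dC (q + 1) p = 0) (u : C q)
    (hu : torusEval R C (q + 1) p = dC q u) :
    ∃ v, torusDiff dC q v = p := by
  obtain ⟨p₁, p₂, p₃, p₄⟩ := p
  obtain ⟨-, -, hp₃, hp₄⟩ := (torusDiff_eq_zero_iff dC _ _ _ _).mp hp
  obtain ⟨a, b, hab⟩ := exists_of_liftBaseChange_id_eq_zero
      (z := p₄ - tensorDiff dC q (1 ⊗ₜ u)) <| by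
    rw [map_sub, tensorDiff, liftBaseChange_id_baseChange, LinearMap.liftBaseChange_one_tmul,
      ← torusEval_apply p₁ p₂ p₃, hu, LinearMap.id_apply, sub_self]
  obtain ⟨c, hc₂, hc₃⟩ := exists_of_actionDiff_add_actionDiff_eq_zero
      (u := p₂ + tensorDiff dC _ a) (v := p₃ + tensorDiff dC _ b) <| by
    rw [map_add, map_add, ← tensorDiff_actionDiff, ← tensorDiff_actionDiff, add_add_add_comm,
      ← map_add, ← hab, map_sub, tensorDiff_tensorDiff dC hsq, sub_zero]
    exact hp₄
  have hc₁ : tensorDiff dC _ c = p₁ := actionDiff_yvar_injective <| by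
    rw [← tensorDiff_actionDiff, ← hc₃, map_add, tensorDiff_tensorDiff dC hsq, add_zero]
    exact (sub_eq_zero.mp hp₃).symm
  refine ⟨(c, a, b, 1 ⊗ₜ u), ?_⟩
  rw [torusDiff_apply, hc₁, ← hc₂, ← hc₃, ← hab, add_sub_cancel_right, add_sub_cancel_right,
    sub_add_cancel]

end MappingTorus

end LaurentKoszul

/-- For a cochain complex `C` of `R[x,x⁻¹,y,y⁻¹]`-modules, the evaluation map
`C ⊗_R L → C`, `p ⊗ z ↦ pz`, induces a quasi-isomorphism from the mapping 2-torus
`T(y,x;0)` to `C`, where `x` and `y` denote the `R`-linear self maps of `C` given by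
multiplication by the indeterminates. -/
theorem mappingTwoTorus_to_complex_quasiIso
    [∀ n, Module (L2 R) (C n)] [∀ n, IsScalarTower R (L2 R) (C n)]
    (dC : ∀ n, C n →ₗ[L2 R] C (n + 1))
    (hsq : ∀ n (x : C n), dC (n + 1) (dC n x) = 0) :
    IsQuasiIso (L2 R) (t2X R C) C
      (t2D R C (fun m => (dC m).restrictScalars R)
        (fun m => ((LinearMap.lsmul (L2 R) (C m)) (yvar R)).restrictScalars R)
        (fun m => ((LinearMap.lsmul (L2 R) (C m)) (xvar R)).restrictScalars R))
      dC
      (fun n => (LinearMap.liftBaseChange (L2 R) (LinearMap.id : C n →ₗ[R] C n)).comp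
        ((LinearMap.snd (L2 R) (L2 R ⊗[R] C (n + 1)) (L2 R ⊗[R] C n)).comp
          ((LinearMap.snd (L2 R) (L2 R ⊗[R] C (n + 1))
            ((L2 R ⊗[R] C (n + 1)) × (L2 R ⊗[R] C n))).comp
            (LinearMap.snd (L2 R) (L2 R ⊗[R] C (n + 1 + 1))
              ((L2 R ⊗[R] C (n + 1)) × (L2 R ⊗[R] C (n + 1)) × (L2 R ⊗[R] C n)))))) :=
  ⟨LaurentKoszul.torusEval_cohomology_surjective dC,
    fun q p hp ⟨u, hu⟩ => LaurentKoszul.torusEval_cohomology_injective dC hsq q p hp u hu⟩
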